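/- Nonnegativity of redistributions in NRM: for every executed step j of NRM in trees and every q ∈ X_j, S_{−q} ≥ 0 and hence R_q = (n_q/n_{X_j})·S_{−q} ≥ 0. In particular, when a'_{j−1} = a_{j−1}, one has V_{a'_j} ∪ V_q ⊆ V_{a_{j−1}} and therefore v^{(1)}_{V∖(V_{a'_j}∪V_q)} ≥ v^{(1)}_{V∖V_{a_{j−1}}} = p^{auc}_{a_{j−1}}. -/

import Mathlib

open Finset

attribute [local instance] Classical.propDecidable

noncomputable section

/-- A tree network rooted at a resource owner `o`: the agents are the elements of
the finite type `α`, and `parent i = none` means that the parent of agent `i` is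
the owner `o` herself.  The field `depth` records the distance to the owner and
witnesses that the parent relation is well-founded. -/
structure TreeNet (α : Type) [Fintype α] [DecidableEq α] where
  parent : α → Option α
  depth : α → ℕ
  depth_root : ∀ i, parent i = none → depth i = 0
  depth_child : ∀ i j, parent i = some j → depth i = depth j + 1

namespace TreeNet

variable {α : Type} [Fintype α] [DecidableEq α]

/-- `j` is a strict ancestor of `i`: iterating `parent` from `i` reaches `j`. -/
def StrictAnc (T : TreeNet α) (j i : α) : Prop :=
  ∃ m : ℕ, 0 < m ∧ (fun x : Option α => x.bind T.parent)^[m] (some i) = some j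

/-- the subtree `V_i` of agent `i` inside the participant set `V`:
`i` together with all its descendants. -/
def sub (T : TreeNet α) (V : Finset α) (i : α) : Finset α :=
  V.filter fun x => x = i ∨ T.StrictAnc i x

/-- `n_i`, the number of agents in the subtree of `i`. -/
def nsub (T : TreeNet α) (V : Finset α) (i : α) : ℕ := (T.sub V i).card

/-- `v^{(1)}_D`: the highest reported valuation in `D` (with the convention `0`
for `D = ∅`). -/
def vmax (val : α → ℝ) (D : Finset α) : ℝ :=
  if h : D.Nonempty then D.sup' h val else 0

/-- the list of strict ancestors of `i`, ordered by increasing depth. -/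
def ancList (T : TreeNet α) (i : α) : List α :=
  match h : T.parent i with
  | none => []
  | some j => T.ancList j ++ [j]
termination_by T.depth i
decreasing_by
  have := T.depth_child i j h
  omega

/-- the full sequence `a_1, …, a_{k+1}`: the strict ancestors of the highest
bidder `hb` ordered by increasing depth, followed by `hb` itself. -/
def seq (T : TreeNet α) (hb : α) : List α := T.ancList hb ++ [hb]

/-- `a_j`, as an `Option α`: `none` for `j = 0` (the owner `o`) and out of range. -/
def aIdx (T : TreeNet α) (hb : α) (j : ℕ) : Option α :=
  if j = 0 then none else (T.seq hb)[j - 1]?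

/-- the required payment `p^{auc}_{a_j} = v^{(1)}_{V ∖ V_{a_j}}` (and `0` for `j = 0`). -/
def pauc (T : TreeNet α) (V : Finset α) (val : α → ℝ) (hb : α) (j : ℕ) : ℝ :=
  match T.aIdx hb j with
  | none => 0
  | some i => vmax val (V \ T.sub V i)

/-- the children inside `V` of a vertex (`none` denotes the owner `o`). -/
def childrenOf (T : TreeNet α) (V : Finset α) (x : Option α) : Finset α :=
  V.filter fun y => T.parent y = x

/-- `X_j`: the set of children of `a_{j-1}`. -/
def X (T : TreeNet α) (V : Finset α) (hb : α) (j : ℕ) : Finset α :=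
  T.childrenOf V (T.aIdx hb (j - 1))

/-- `n_{X_j} = Σ_{q ∈ X_j} n_q`. -/
def nX (T : TreeNet α) (V : Finset α) (hb : α) (j : ℕ) : ℕ :=
  ∑ q ∈ T.X V hb j, T.nsub V q

/-- subtree of an optional vertex, with the convention `∅` for `none`. -/
def subO (T : TreeNet α) (V : Finset α) : Option α → Finset α
  | none => ∅
  | some i => T.sub V i

/-- subtree of an optional vertex, with the convention `V` for the owner `o`. -/
def subUp (T : TreeNet α) (V : Finset α) : Option α → Finset α
  | none => V
  | some i => T.sub V i

/-- `S_{-q}` at step `j`, where `sel` selects a highest bidder in a given set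
(`h' = sel (V ∖ V_q)` is a highest bidder without `q`'s participation). -/
def Sneg (T : TreeNet α) (V : Finset α) (val : α → ℝ) (sel : Finset α → Option α)
    (hb : α) (j : ℕ) (q : α) : ℝ :=
  match sel (V \ T.sub V q) with
  | none => 0
  | some h' =>
      if T.aIdx h' (j - 1) = T.aIdx hb (j - 1) then
        vmax val (V \ (T.subO V (T.aIdx h' j) ∪ T.sub V q)) - T.pauc V val hb (j - 1)
      else 0

/-- the money `R_q = (n_q / n_{X_j}) ⬝ S_{-q}` redistributed to `q` in step `j`. -/
def R (T : TreeNet α) (V : Finset α) (val : α → ℝ) (sel : Finset α → Option α)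
    (hb : α) (j : ℕ) (q : α) : ℝ :=
  (T.nsub V q : ℝ) / (T.nX V hb j : ℝ) * T.Sneg V val sel hb j q

/-- the allocation condition `v̂_{a_j} ≥ p^{auc}_{a_j}` holds at step `j`. -/
def Stops (T : TreeNet α) (V : Finset α) (val : α → ℝ) (hb : α) (j : ℕ) : Prop :=
  ∃ i, T.aIdx hb j = some i ∧ T.pauc V val hb j ≤ val i

/-- the step `J` at which the procedure stops. -/
def stepJ (T : TreeNet α) (V : Finset α) (val : α → ℝ) (hb : α) : ℕ :=
  sInf {j | 1 ≤ j ∧ T.Stops V val hb j}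

/-- the winner of the item. -/
def winner (T : TreeNet α) (V : Finset α) (val : α → ℝ) (hb : α) : Option α :=
  T.aIdx hb (T.stepJ V val hb)

/-- the (first) step at which agent `i` is assigned a payment. -/
def stepOf (T : TreeNet α) (V : Finset α) (val : α → ℝ) (hb : α) (i : α) : ℕ :=
  sInf {j | 1 ≤ j ∧ j ≤ T.stepJ V val hb ∧ i ∈ T.X V hb j}

/-- the payment of agent `i` under NRM: the winner pays `p^{auc}_{a_J} - R_{a_J}`,
every other agent considered in some executed step `j` pays `-R_q`, and every
agent not assigned a payment pays `0`. -/
def pay (T : TreeNet α) (V : Finset α) (val : α → ℝ) (sel : Finset α → Option α)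
    (hb : α) (i : α) : ℝ :=
  if T.winner V val hb = some i then
    T.pauc V val hb (T.stepJ V val hb) - T.R V val sel hb (T.stepJ V val hb) i
  else if ∃ j, 1 ≤ j ∧ j ≤ T.stepJ V val hb ∧ i ∈ T.X V hb j then
    -T.R V val sel hb (T.stepOf V val hb i) i
  else 0

/-- the surplus `S = Σ_{i ∈ V} p_i` of the mechanism. -/
def surplus (T : TreeNet α) (V : Finset α) (val : α → ℝ) (sel : Finset α → Option α)
    (hb : α) : ℝ :=
  ∑ i ∈ V, T.pay V val sel hb i

/-- the utility of agent `i` whose true valuation is `tv`: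
`tv` if she wins, minus her payment. -/
def util (T : TreeNet α) (V : Finset α) (val : α → ℝ) (sel : Finset α → Option α)
    (hb : α) (tv : ℝ) (i : α) : ℝ :=
  (if T.winner V val hb = some i then tv else 0) - T.pay V val sel hb i

/-- the participant set `V` is closed under taking parents
(as is every set generated by invitation chains). -/
def Closed (T : TreeNet α) (V : Finset α) : Prop :=
  ∀ i ∈ V, ∀ j, T.parent i = some j → j ∈ V

/-- `hb` is a highest bidder of `V`. -/
def IsTop (V : Finset α) (val : α → ℝ) (hb : α) : Prop :=
  hb ∈ V ∧ ∀ i ∈ V, val i ≤ val hb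

/-- `sel` selects a highest bidder of every nonempty finite set of agents. -/
def SelValid (val : α → ℝ) (sel : Finset α → Option α) : Prop :=
  ∀ D : Finset α, (D.Nonempty → ∃ b, sel D = some b) ∧
    ∀ b, sel D = some b → b ∈ D ∧ ∀ x ∈ D, val x ≤ val b

/-- the true neighbour set of agent `i` that she may invite: her children. -/
def childrenAll (T : TreeNet α) (i : α) : Finset α :=
  Finset.univ.filter fun y => T.parent y = some i

/-- agent `i` is reached from the owner by the chains of invitations `inv`
(the owner informs all her neighbours, i.e. the agents with `parent = none`). -/
def Reached (T : TreeNet α) (inv : α → Finset α) (i : α) : Prop :=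
  match h : T.parent i with
  | none => True
  | some j => T.Reached inv j ∧ i ∈ inv j
termination_by T.depth i
decreasing_by
  have := T.depth_child i j h
  omega

/-- the participant set generated by the invitations `inv`. -/
def Vgen (T : TreeNet α) (inv : α → Finset α) : Finset α :=
  Finset.univ.filter fun i => T.Reached inv i

end TreeNet

/-
The subtree of a child is contained in the subtree of its parent, and `a'_j` is a child of
`a'_{j-1} = a_{j-1}`, just as `q ∈ X_j` is. So `V ∖ (V_{a'_j} ∪ V_q)` contains
`V ∖ V_{a_{j-1}}`, whose highest valuation is `p^{auc}_{a_{j-1}}` (or `0` at the owner); with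
nonnegative valuations `v^{(1)}` is monotone, which gives `S_{-q} ≥ 0` and then `R_q ≥ 0`.
-/

namespace TreeNet

variable {α : Type} [Fintype α] [DecidableEq α] (T : TreeNet α)

lemma strictAnc_of_parent_eq_some {a q : α} (h : T.parent q = some a) : T.StrictAnc a q :=
  ⟨1, one_pos, by simp [h]⟩

lemma StrictAnc.trans {T : TreeNet α} {a q x : α} (h₁ : T.StrictAnc a q)
    (h₂ : T.StrictAnc q x) : T.StrictAnc a x := by
  obtain ⟨m₁, hm₁, e₁⟩ := h₁
  obtain ⟨m₂, -, e₂⟩ := h₂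
  exact ⟨m₁ + m₂, by omega, by rw [Function.iterate_add_apply, e₂, e₁]⟩

lemma sub_subset_subUp_of_parent_eq {V : Finset α} {q : α} {x : Option α}
    (h : T.parent q = x) : T.sub V q ⊆ T.subUp V x := by
  cases x with
  | none => exact filter_subset _ _
  | some a =>
    have hqa := T.strictAnc_of_parent_eq_some h
    intro y hy
    simp only [sub, subUp, mem_filter] at hy ⊢
    rcases hy with ⟨hyV, rfl | hy⟩
    exacts [⟨hyV, Or.inr hqa⟩, ⟨hyV, Or.inr (hqa.trans hy)⟩]

lemma seq_of_parent_eq_none {i : α} (h : T.parent i = none) : T.seq i = [i] := by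
  rw [seq, ancList]
  split <;> simp_all

lemma seq_of_parent_eq_some {i p : α} (h : T.parent i = some p) :
    T.seq i = T.seq p ++ [i] := by
  rw [seq, ancList]
  split <;> simp_all [seq]

lemma parent_eq_none_of_mem_head?_seq (i : α) : ∀ b ∈ (T.seq i).head?, T.parent b = none := by
  cases h : T.parent i with
  | none => simpa [T.seq_of_parent_eq_none h] using h
  | some p =>
    rw [T.seq_of_parent_eq_some h, List.head?_append_of_ne_nil _ (by simp [seq])]
    exact parent_eq_none_of_mem_head?_seq p
termination_by T.depth i
decreasing_by have := T.depth_child i p h; omega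

lemma isChain_seq (i : α) : (T.seq i).IsChain fun a b => T.parent b = some a := by
  cases h : T.parent i with
  | none => simp [T.seq_of_parent_eq_none h]
  | some p =>
    rw [T.seq_of_parent_eq_some h]
    exact (isChain_seq p).append (List.isChain_singleton i) (by simp [seq, h])
termination_by T.depth i
decreasing_by have := T.depth_child i p h; omega

lemma parent_eq_aIdx_of_aIdx_succ_eq_some {i b : α} {k : ℕ}
    (h : T.aIdx i (k + 1) = some b) : T.parent b = T.aIdx i k := by
  simp only [aIdx, add_tsub_cancel_right, Nat.add_eq_zero_iff, one_ne_zero, and_false,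
    if_false] at h
  rcases k with _ | k
  · exact T.parent_eq_none_of_mem_head?_seq i b (by simpa [List.head?_eq_getElem?] using h)
  · obtain ⟨hlt, rfl⟩ := List.getElem?_eq_some_iff.mp h
    simpa [aIdx, List.getElem?_eq_getElem (Nat.lt_of_succ_lt hlt)] using
      (T.isChain_seq i).getElem k hlt

lemma subO_aIdx_subset_subUp_aIdx_pred (V : Finset α) (i : α) (j : ℕ) :
    T.subO V (T.aIdx i j) ⊆ T.subUp V (T.aIdx i (j - 1)) := by
  rcases j with _ | k
  · simp [aIdx, subO]
  · cases h : T.aIdx i (k + 1) with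
    | none => exact empty_subset _
    | some b => exact T.sub_subset_subUp_of_parent_eq (T.parent_eq_aIdx_of_aIdx_succ_eq_some h)

omit [Fintype α] [DecidableEq α] in
lemma vmax_mono {val : α → ℝ} {D E : Finset α} (hE : ∀ i ∈ E, 0 ≤ val i) (hDE : D ⊆ E) :
    vmax val D ≤ vmax val E := by
  unfold vmax
  split_ifs with hD hE'
  · exact sup'_le _ _ fun x hx => le_sup' val (hDE hx)
  · exact absurd (hD.mono hDE) hE'
  · obtain ⟨x, hx⟩ := ‹E.Nonempty›
    exact (hE x hx).trans (le_sup' val hx)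
  · exact le_rfl

lemma vmax_sdiff_subUp_aIdx (V : Finset α) (val : α → ℝ) (hb : α) (k : ℕ) :
    vmax val (V \ T.subUp V (T.aIdx hb k)) = T.pauc V val hb k := by
  cases h : T.aIdx hb k <;> simp only [pauc, h, subUp]
  simp [vmax]

lemma pauc_le_vmax_sdiff {V D : Finset α} {val : α → ℝ} (hval : ∀ i ∈ V, 0 ≤ val i)
    {hb : α} {k : ℕ} (hD : D ⊆ T.subUp V (T.aIdx hb k)) :
    T.pauc V val hb k ≤ vmax val (V \ D) := by
  rw [← T.vmax_sdiff_subUp_aIdx]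
  exact vmax_mono (fun i hi => hval i (sdiff_subset hi)) (sdiff_subset_sdiff subset_rfl hD)

lemma subO_union_sub_subset_subUp {V : Finset α} {hb h' q : α} {j : ℕ}
    (hq : q ∈ T.X V hb j) (hh' : T.aIdx h' (j - 1) = T.aIdx hb (j - 1)) :
    T.subO V (T.aIdx h' j) ∪ T.sub V q ⊆ T.subUp V (T.aIdx hb (j - 1)) :=
  union_subset (hh' ▸ T.subO_aIdx_subset_subUp_aIdx_pred V h' j)
    (T.sub_subset_subUp_of_parent_eq (mem_filter.mp hq).2)

lemma Sneg_nonneg {V : Finset α} {val : α → ℝ} (hval : ∀ i ∈ V, 0 ≤ val i)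
    (sel : Finset α → Option α) {hb q : α} {j : ℕ} (hq : q ∈ T.X V hb j) :
    0 ≤ T.Sneg V val sel hb j q := by
  unfold Sneg
  split
  · exact le_rfl
  · split_ifs with hh'
    · exact sub_nonneg.mpr (T.pauc_le_vmax_sdiff hval (T.subO_union_sub_subset_subUp hq hh'))
    · exact le_rfl

lemma R_nonneg {V : Finset α} {val : α → ℝ} (hval : ∀ i ∈ V, 0 ≤ val i)
    (sel : Finset α → Option α) {hb q : α} {j : ℕ} (hq : q ∈ T.X V hb j) :
    0 ≤ T.R V val sel hb j q :=
  mul_nonneg (by positivity) (T.Sneg_nonneg hval sel hq)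

end TreeNet

theorem TreeNet.nrm_tree_redistribution_nonneg_general
    {α : Type} [Fintype α] [DecidableEq α] (T : TreeNet α)
    (V : Finset α)
    (val : α → ℝ) (hval : ∀ i ∈ V, 0 ≤ val i)
    (sel : Finset α → Option α)
    (hb : α)
    (j : ℕ) :
    (∀ q ∈ T.X V hb j,
        0 ≤ T.Sneg V val sel hb j q ∧ 0 ≤ T.R V val sel hb j q) ∧
    (∀ q ∈ T.X V hb j, ∀ h', sel (V \ T.sub V q) = some h' →
        T.aIdx h' (j - 1) = T.aIdx hb (j - 1) →
        T.subO V (T.aIdx h' j) ∪ T.sub V q ⊆ T.subUp V (T.aIdx hb (j - 1)) ∧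
        TreeNet.vmax val (V \ T.subUp V (T.aIdx hb (j - 1))) = T.pauc V val hb (j - 1) ∧
        T.pauc V val hb (j - 1) ≤
          TreeNet.vmax val (V \ (T.subO V (T.aIdx h' j) ∪ T.sub V q))) := by
  refine ⟨fun q hq => ⟨T.Sneg_nonneg hval sel hq, T.R_nonneg hval sel hq⟩,
    fun q hq h' _ hh' => ?_⟩
  have hsub := T.subO_union_sub_subset_subUp hq hh'
  exact ⟨hsub, T.vmax_sdiff_subUp_aIdx V val hb (j - 1), T.pauc_le_vmax_sdiff hval hsub⟩

/-- Nonnegativity of redistributions in NRM: for every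
executed step `j` of NRM in trees and every `q ∈ X_j`, `S_{-q} ≥ 0` and hence
`R_q = (n_q / n_{X_j}) ⬝ S_{-q} ≥ 0`.  In particular, when `a'_{j-1} = a_{j-1}`,
one has `V_{a'_j} ∪ V_q ⊆ V_{a_{j-1}}` and therefore
`v^{(1)}_{V ∖ (V_{a'_j} ∪ V_q)} ≥ v^{(1)}_{V ∖ V_{a_{j-1}}} = p^{auc}_{a_{j-1}}`. -/
theorem TreeNet.nrm_tree_redistribution_nonneg
    {α : Type} [Fintype α] [DecidableEq α] (T : TreeNet α)
    (V : Finset α) (hV : T.Closed V)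
    (val : α → ℝ) (hval : ∀ i ∈ V, 0 ≤ val i)
    (sel : Finset α → Option α) (hsel : TreeNet.SelValid val sel)
    (hb : α) (hhb : TreeNet.IsTop V val hb)
    (j : ℕ) (hj1 : 1 ≤ j) (hj2 : j ≤ T.stepJ V val hb) :   -- an executed step
    (∀ q ∈ T.X V hb j,
        0 ≤ T.Sneg V val sel hb j q ∧ 0 ≤ T.R V val sel hb j q) ∧
    (∀ q ∈ T.X V hb j, ∀ h', sel (V \ T.sub V q) = some h' →
        T.aIdx h' (j - 1) = T.aIdx hb (j - 1) →
        T.subO V (T.aIdx h' j) ∪ T.sub V q ⊆ T.subUp V (T.aIdx hb (j - 1)) ∧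
        TreeNet.vmax val (V \ T.subUp V (T.aIdx hb (j - 1))) = T.pauc V val hb (j - 1) ∧
        T.pauc V val hb (j - 1) ≤
          TreeNet.vmax val (V \ (T.subO V (T.aIdx h' j) ∪ T.sub V q))) :=
  TreeNet.nrm_tree_redistribution_nonneg_general T V val hval sel hb j
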